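/- There exist infinitely many rational numbers c such that the map f_c(z) = z^2 + c has exactly 6 rational preperiodic points, of which exactly 2 are periodic, and these two periodic points form a cycle of exact length 2 (i.e., f_c interchanges two distinct rational points). (This data characterizes the directed graph 6(2).) -/

import Mathlib

/-- The quadratic map `f_c(z) = z² + c`. -/
def fc (c : ℚ) : ℚ → ℚ := fun z => z ^ 2 + c

/-- `x` is preperiodic for `f_c`: its forward orbit is eventually periodic. -/
def IsPreper (c x : ℚ) : Prop := ∃ m n : ℕ, m < n ∧ (fc c)^[m] x = (fc c)^[n] x

/-- `x` is periodic for `f_c`. -/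
def IsPer (c x : ℚ) : Prop := ∃ n : ℕ, 1 ≤ n ∧ (fc c)^[n] x = x

/-!
For an odd prime `p`, the parameter `c = Graph62.c p` gives `f_c` the rational 2-cycle
`a ↔ b` together with the strictly preperiodic points `-a ↦ b`, `-b ↦ a` and `±q ↦ -a`.
There are no others: as `(2p)² c ∈ ℤ`, a valuation argument shows that every rational
preperiodic point is `x = W / (2p)` with `W ∈ ℤ`, and the escape bound `|x| < (p + 3) / 2`
holds for `x` and for `f_c(x) = W₁ / (2p)`. The relation `W² = (p² + p - 1)² + 3p² + 2pW₁`
then forces `p ∣ W² - 1`, `W` even and `p² - 2 ≤ |W| ≤ (p + 1)²`, so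
`|W| ∈ {p² - 1, p² + 1, p² + 2p - 1, (p + 1)²}`, and `|W| = (p + 1)²` is ruled out because it
would give `2p f_c(x) = p² + 2p + 3`. Distinct primes give distinct `c`.
-/

lemma fc_neg (c z : ℚ) : fc c (-z) = fc c z := by
  simp [fc]

lemma IsPreper.fc_apply {c x : ℚ} (h : IsPreper c x) : IsPreper c (fc c x) := by
  obtain ⟨m, n, hmn, heq⟩ := h
  refine ⟨m, n, hmn, ?_⟩
  rw [← Function.iterate_succ_apply, ← Function.iterate_succ_apply,
    Function.iterate_succ_apply', Function.iterate_succ_apply', heq]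

lemma IsPreper.iterate {c x : ℚ} (h : IsPreper c x) (k : ℕ) : IsPreper c ((fc c)^[k] x) := by
  induction k with
  | zero => exact h
  | succ k ih => simpa only [Function.iterate_succ_apply'] using ih.fc_apply

lemma IsPreper.of_fc_apply {c x : ℚ} (h : IsPreper c (fc c x)) : IsPreper c x := by
  obtain ⟨m, n, hmn, heq⟩ := h
  exact ⟨m + 1, n + 1, by omega, by simpa only [Function.iterate_succ_apply] using heq⟩

lemma IsPer.isPreper {c x : ℚ} (h : IsPer c x) : IsPreper c x := by
  obtain ⟨n, hn, hx⟩ := h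
  exact ⟨0, n, hn, hx.symm⟩

lemma IsPer.exists_iterate_eq {c x : ℚ} (h : IsPer c x) (k : ℕ) :
    ∃ y, IsPreper c y ∧ (fc c)^[k] y = x := by
  have hpre := h.isPreper
  obtain ⟨n, hn, hx⟩ := h
  refine ⟨(fc c)^[n * k - k] x, hpre.iterate _, ?_⟩
  have hk : k + (n * k - k) = n * k := by
    have : k ≤ n * k := Nat.le_mul_of_pos_left k hn
    omega
  rw [← Function.iterate_add_apply, hk]
  exact (Function.IsPeriodicPt.mul_const hx k).eq

lemma abs_add_one_le_abs_fc {c M z : ℚ} (hM : 1 ≤ M) (hc : M + 1 ≤ M ^ 2 + c)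
    (hz : M ≤ |z|) : |z| + 1 ≤ |fc c z| := by
  have hz2 : z ^ 2 = |z| ^ 2 := (sq_abs z).symm
  have h : |z| + 1 ≤ fc c z := by
    simp only [fc]
    nlinarith [mul_nonneg (sub_nonneg.mpr hz) (show 0 ≤ |z| + M - 1 by linarith)]
  exact h.trans (le_abs_self _)

lemma abs_lt_of_isPreper {c M x : ℚ} (hM : 1 ≤ M) (hc : M + 1 ≤ M ^ 2 + c)
    (hx : IsPreper c x) : |x| < M := by
  by_contra! hxM
  have hge : ∀ k, M ≤ |(fc c)^[k] x| := by
    intro k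
    induction k with
    | zero => exact hxM
    | succ k ih =>
      rw [Function.iterate_succ_apply']
      linarith [abs_add_one_le_abs_fc hM hc ih]
  have hmono : StrictMono fun k => |(fc c)^[k] x| := strictMono_nat_of_lt_succ fun k => by
    simp only [Function.iterate_succ_apply']
    linarith [abs_add_one_le_abs_fc hM hc (hge k)]
  obtain ⟨m, n, hmn, heq⟩ := hx
  exact hmn.ne (hmono.injective (congrArg abs heq))

lemma Rat.den_eq_one_of_forall_padicValRat_nonneg {x : ℚ}
    (h : ∀ q : ℕ, q.Prime → 0 ≤ padicValRat q x) : x.den = 1 := by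
  by_contra hden
  obtain ⟨q, hq, hqd⟩ := Nat.exists_prime_and_dvd hden
  have := Fact.mk hq
  have hnum : ¬ (q : ℤ) ∣ x.num := fun hdvd =>
    hq.ne_one (Nat.Coprime.eq_one_of_dvd (x.reduced.coprime_dvd_left (Int.natCast_dvd.mp hdvd)) hqd)
  have hval : padicValRat q x = -(padicValNat q x.den : ℤ) := by
    rw [padicValRat_def, padicValInt.eq_zero_of_not_dvd hnum, Nat.cast_zero, zero_sub]
  have := h q hq
  have : 1 ≤ padicValNat q x.den := one_le_padicValNat_of_dvd x.den_nz hqd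
  omega

section padic

variable {q : ℕ} [Fact q.Prime]

lemma padicValRat_fc {c z : ℚ} (hz : padicValRat q z < 0)
    (hc : 2 * padicValRat q z < padicValRat q c) :
    padicValRat q (fc c z) = 2 * padicValRat q z := by
  have hz0 : z ≠ 0 := by rintro rfl; simp at hz
  have hz2 : padicValRat q (z ^ 2) = 2 * padicValRat q z := by
    rw [padicValRat.pow z]; push_cast; ring
  rcases eq_or_ne c 0 with rfl | hc0
  · simp [fc, hz2]
  have hsum : z ^ 2 + c ≠ 0 := by
    intro h
    rw [eq_neg_of_add_eq_zero_right h, padicValRat.neg] at hc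
    omega
  rw [fc, padicValRat.add_eq_of_lt hsum (pow_ne_zero 2 hz0) hc0 (by omega), hz2]

lemma padicValRat_iterate_fc {c x : ℚ} (hx : padicValRat q x < 0)
    (hc : 2 * padicValRat q x < padicValRat q c) (k : ℕ) :
    padicValRat q ((fc c)^[k] x) = 2 ^ k * padicValRat q x := by
  induction k with
  | zero => simp
  | succ k ih =>
    have h2 : (1 : ℤ) ≤ 2 ^ k := one_le_pow₀ one_le_two
    rw [Function.iterate_succ_apply', padicValRat_fc (by rw [ih]; nlinarith) (by rw [ih]; nlinarith),
      ih, pow_succ]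
    ring

-- Otherwise the valuation would double at every step along the orbit.
lemma padicValRat_le_of_isPreper {c x : ℚ} (hx : IsPreper c x) (hneg : padicValRat q x < 0) :
    padicValRat q c ≤ 2 * padicValRat q x := by
  by_contra! hc
  obtain ⟨m, n, hmn, heq⟩ := hx
  have h := congrArg (padicValRat q) heq
  rw [padicValRat_iterate_fc hneg hc, padicValRat_iterate_fc hneg hc] at h
  have : (2 : ℤ) ^ m < 2 ^ n := pow_lt_pow_right₀ one_lt_two hmn
  nlinarith

end padic

lemma exists_int_mul_eq_of_isPreper {c x : ℚ} {d m : ℤ} (hd : d ≠ 0) (hm : (d : ℚ) ^ 2 * c = m)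
    (hx : IsPreper c x) : ∃ W : ℤ, (d : ℚ) * x = W := by
  refine ⟨(d * x).num, (Rat.coe_int_num_of_den_eq_one ?_).symm⟩
  refine Rat.den_eq_one_of_forall_padicValRat_nonneg fun q hq => ?_
  have := Fact.mk hq
  rcases eq_or_ne x 0 with rfl | hx0
  · simp
  have hd0 : (d : ℚ) ≠ 0 := Int.cast_ne_zero.mpr hd
  have hvd : 0 ≤ padicValRat q d := by rw [padicValRat.of_int]; positivity
  rw [padicValRat.mul hd0 hx0]
  by_contra! hneg
  have hxneg : padicValRat q x < 0 := by omega
  have hcx := padicValRat_le_of_isPreper hx hxneg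
  have hc0 : c ≠ 0 := by rintro rfl; simp at hcx; omega
  have hvm : 0 ≤ padicValRat q (m : ℚ) := by rw [padicValRat.of_int]; positivity
  rw [← hm, padicValRat.mul (pow_ne_zero 2 hd0) hc0, padicValRat.pow] at hvm
  omega

lemma Int.eq_or_eq_add_two_of_odd_mul {p k : ℤ} (hp : 3 ≤ p) (hpk : Odd (p * k))
    (hlo : p ^ 2 - 3 ≤ p * k) (hhi : p * k ≤ p ^ 2 + 2 * p + 2) : k = p ∨ k = p + 2 := by
  obtain ⟨hp_odd, hk_odd⟩ := Int.odd_mul.mp hpk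
  rw [Int.odd_iff] at hp_odd hk_odd
  have hk_lo : p ≤ k := by
    by_contra! h
    have : k ≤ p - 2 := by omega
    nlinarith
  have hk_hi : k ≤ p + 2 := by
    by_contra! h
    nlinarith
  omega

namespace Graph62

/-- Chosen so that `-3 - 4c = ((u² + u - 1) / u)²`, which makes the 2-cycle `{a u, b u}` rational,
and `-a u - c u = (q u)²`, which gives `-a u` the rational preimages `±q u`. -/
def c (u : ℚ) : ℚ := -((u ^ 2 + u - 1) ^ 2 + 3 * u ^ 2) / (2 * u) ^ 2

def a (u : ℚ) : ℚ := (u ^ 2 - 1) / (2 * u)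

def b (u : ℚ) : ℚ := -(u ^ 2 + 2 * u - 1) / (2 * u)

def q (u : ℚ) : ℚ := (u ^ 2 + 1) / (2 * u)

section orbits

variable {u : ℚ} (hu : u ≠ 0)
include hu

lemma fc_a : fc (c u) (a u) = b u := by
  simp only [fc, a, b, c]; field_simp; ring

lemma fc_b : fc (c u) (b u) = a u := by
  simp only [fc, a, b, c]; field_simp; ring

lemma fc_q : fc (c u) (q u) = -a u := by
  simp only [fc, a, q, c]; field_simp; ring

lemma two_mul_mul_fc (x : ℚ) :
    2 * u * (2 * u * fc (c u) x) = (2 * u * x) ^ 2 - ((u ^ 2 + u - 1) ^ 2 + 3 * u ^ 2) := by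
  simp only [fc, c]; field_simp; ring

lemma isPer_a : IsPer (c u) (a u) :=
  ⟨2, one_le_two, by simp only [Function.iterate_succ_apply', Function.iterate_zero_apply, fc_a hu, fc_b hu]⟩

lemma isPer_b : IsPer (c u) (b u) :=
  ⟨2, one_le_two, by simp only [Function.iterate_succ_apply', Function.iterate_zero_apply, fc_a hu, fc_b hu]⟩

lemma isPreper_neg_a : IsPreper (c u) (-a u) :=
  IsPreper.of_fc_apply (by rw [fc_neg, fc_a hu]; exact (isPer_b hu).isPreper)

lemma isPreper_neg_b : IsPreper (c u) (-b u) :=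
  IsPreper.of_fc_apply (by rw [fc_neg, fc_b hu]; exact (isPer_a hu).isPreper)

lemma isPreper_q : IsPreper (c u) (q u) :=
  IsPreper.of_fc_apply (by rw [fc_q hu]; exact isPreper_neg_a hu)

lemma isPreper_neg_q : IsPreper (c u) (-q u) :=
  IsPreper.of_fc_apply (by rw [fc_neg, fc_q hu]; exact isPreper_neg_a hu)

end orbits

lemma lt_chain {u : ℚ} (hu : 1 < u) :
    b u < -q u ∧ -q u < -a u ∧ -a u < a u ∧ a u < q u ∧ q u < -b u := by
  have h2u : 0 < 2 * u := by linarith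
  simp only [a, b, q, ← neg_div, div_lt_div_iff_of_pos_right h2u]
  refine ⟨?_, ?_, ?_, ?_, ?_⟩ <;> nlinarith

lemma abs_lt_of_isPreper_c {u x : ℚ} (hu : 1 ≤ u) (hx : IsPreper (c u) x) : |x| < (u + 3) / 2 := by
  refine abs_lt_of_isPreper (by linarith) ?_ hx
  have hu0 : u ≠ 0 := by positivity
  have key : ((u + 3) / 2) ^ 2 + c u - ((u + 3) / 2 + 1) =
      (u - 1) * (2 * u ^ 2 - u + 1) / (2 * u) ^ 2 := by
    simp only [c]; field_simp; ring
  have : 0 ≤ (u - 1) * (2 * u ^ 2 - u + 1) / (2 * u) ^ 2 := by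
    apply div_nonneg _ (sq_nonneg _); apply mul_nonneg <;> nlinarith
  linarith

lemma c_injOn : Set.InjOn c (Set.Ici 1) := by
  intro u (hu : 1 ≤ u) v (hv : 1 ≤ v) h
  have hu0 : u ≠ 0 := by positivity
  have hv0 : v ≠ 0 := by positivity
  simp only [c] at h
  field_simp at h
  have hfac : (u - v) * ((u * v + 1) * ((u + v) * (u * v - 1) + 2 * u * v)) = 0 := by
    linear_combination -h
  have hpos : 0 < (u * v + 1) * ((u + v) * (u * v - 1) + 2 * u * v) := by
    have : 1 ≤ u * v := by nlinarith
    apply mul_pos <;> nlinarith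
  linarith [(mul_eq_zero.mp hfac).resolve_right hpos.ne']

section arithmetic

variable {p : ℕ} (hp : p.Prime) (hodd : Odd p)
include hp hodd

-- `h` is `f_c(W / (2p)) = W₁ / (2p)` for `c = c p`, cleared of denominators.
lemma abs_eq_of_sq_eq {W W₁ : ℤ}
    (hW₁ : |W₁| < p * (p + 3)) (h : W ^ 2 = ((p : ℤ) ^ 2 + p - 1) ^ 2 + 3 * p ^ 2 + 2 * p * W₁) :
    |W| = p ^ 2 - 1 ∨ |W| = p ^ 2 + 1 ∨ |W| = p ^ 2 + 2 * p - 1 ∨ |W| = p ^ 2 + 2 * p + 1 := by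
  obtain ⟨t, ht⟩ := hodd
  have hp3 : (3 : ℤ) ≤ p := by have := hp.two_le; omega
  set V := |W| with hV
  have hV0 : 0 ≤ V := abs_nonneg W
  have hVsq : V ^ 2 = ((p : ℤ) ^ 2 + p - 1) ^ 2 + 3 * p ^ 2 + 2 * p * W₁ := by rw [hV, sq_abs, h]
  have hV_even : Even V := by
    have : Even (V ^ 2) := ⟨2 * (4 * t ^ 4 + 12 * t ^ 3 + 14 * t ^ 2 + 6 * t + 1) + p * W₁, by
      rw [hVsq, ht]; push_cast; ring⟩
    exact (Int.even_pow.mp this).1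
  have hdvd : (p : ℤ) ∣ (V - 1) * (V + 1) :=
    ⟨p ^ 3 + 2 * p ^ 2 + 2 * p - 2 + 2 * W₁, by linear_combination hVsq⟩
  obtain ⟨hW₁lo, hW₁hi⟩ := abs_lt.mp hW₁
  have hVlo : (p : ℤ) ^ 2 - 2 ≤ V := by
    by_contra! hlt
    nlinarith [mul_self_le_mul_self hV0 (show V ≤ p ^ 2 - 3 by omega)]
  have hVhi : V ≤ (p : ℤ) ^ 2 + 2 * p + 1 := by
    by_contra! hlt
    nlinarith [mul_self_le_mul_self (by positivity) (show (p : ℤ) ^ 2 + 2 * p + 2 ≤ V by omega)]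
  rcases Int.Prime.dvd_mul' hp hdvd with ⟨k, hk⟩ | ⟨k, hk⟩
  · have hpk : Odd ((p : ℤ) * k) := hk ▸ hV_even.sub_odd odd_one
    rcases Int.eq_or_eq_add_two_of_odd_mul hp3 hpk (by omega) (by omega) with rfl | rfl
    · right; left; linear_combination hk
    · right; right; right; linear_combination hk
  · have hpk : Odd ((p : ℤ) * k) := hk ▸ hV_even.add_odd odd_one
    rcases Int.eq_or_eq_add_two_of_odd_mul hp3 hpk (by omega) (by omega) with rfl | rfl
    · left; linear_combination hk
    · right; right; left; linear_combination hk

lemma exists_int_two_mul_eq {x : ℚ} (hx : IsPreper (c p) x) :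
    ∃ W : ℤ, 2 * p * x = W ∧
      (|W| = p ^ 2 - 1 ∨ |W| = p ^ 2 + 1 ∨ |W| = p ^ 2 + 2 * p - 1 ∨ |W| = p ^ 2 + 2 * p + 1) := by
  have hp1 : (1 : ℚ) ≤ p := by exact_mod_cast hp.one_le
  have hp0 : (p : ℚ) ≠ 0 := by positivity
  have h2p : ((2 * p : ℤ) : ℚ) ^ 2 * c p = ((-(((p : ℤ) ^ 2 + p - 1) ^ 2 + 3 * p ^ 2) : ℤ) : ℚ) := by
    simp only [c]; push_cast; field_simp
  have h2p0 : (2 * p : ℤ) ≠ 0 := by have := hp.pos; omega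
  obtain ⟨W, hW⟩ := exists_int_mul_eq_of_isPreper h2p0 h2p hx
  obtain ⟨W₁, hW₁⟩ := exists_int_mul_eq_of_isPreper h2p0 h2p hx.fc_apply
  push_cast at hW hW₁
  refine ⟨W, hW, abs_eq_of_sq_eq hp hodd (W₁ := W₁) ?_ ?_⟩
  · have hbound := abs_lt_of_isPreper_c hp1 hx.fc_apply
    have : |(W₁ : ℚ)| < p * (p + 3) := by
      rw [← hW₁, abs_mul, abs_of_pos (by positivity : (0 : ℚ) < 2 * p)]
      nlinarith
    exact_mod_cast this
  · have := two_mul_mul_fc hp0 x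
    rw [hW, hW₁] at this
    have hq : (W : ℚ) ^ 2 = ((p : ℚ) ^ 2 + p - 1) ^ 2 + 3 * p ^ 2 + 2 * p * W₁ := by
      linear_combination -this
    exact_mod_cast hq

lemma abs_two_mul_ne_of_isPreper {x : ℚ} (hx : IsPreper (c p) x) :
    |2 * p * x| ≠ ((p : ℚ) + 1) ^ 2 := by
  intro h
  have hp0 : (p : ℚ) ≠ 0 := by exact_mod_cast hp.ne_zero
  have hfx : 2 * p * fc (c p) x = (p : ℚ) ^ 2 + 2 * p + 3 := by
    have := two_mul_mul_fc hp0 x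
    rw [← sq_abs (2 * p * x), h] at this
    apply mul_left_cancel₀ (by positivity : (2 * p : ℚ) ≠ 0)
    linear_combination this
  obtain ⟨W₁, hW₁, hcases⟩ := exists_int_two_mul_eq hp hodd hx.fc_apply
  have hW₁' : W₁ = (p : ℤ) ^ 2 + 2 * p + 3 := by exact_mod_cast hW₁.symm.trans hfx
  rw [hW₁', abs_of_pos (by positivity)] at hcases
  omega

lemma isPreper_iff {x : ℚ} :
    IsPreper (c p) x ↔ x ∈ ({b p, -q p, -a p, a p, q p, -b p} : Set ℚ) := by
  have hp1 : (1 : ℚ) < p := by exact_mod_cast hp.one_lt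
  have hp0 : (p : ℚ) ≠ 0 := by positivity
  constructor
  · intro hx
    obtain ⟨W, hW, hcases⟩ := exists_int_two_mul_eq hp hodd hx
    have hne := abs_two_mul_ne_of_isPreper hp hodd hx
    have habs : |x| * (2 * p) = ((|W| : ℤ) : ℚ) := by
      rw [Int.cast_abs, ← hW, abs_mul, abs_of_pos (by positivity : (0 : ℚ) < 2 * p), mul_comm]
    have key : |x| = a p ∨ |x| = q p ∨ |x| = -b p := by
      simp only [a, q, b, neg_div, neg_neg, eq_div_iff (by positivity : (2 * p : ℚ) ≠ 0), habs]
      rcases hcases with h | h | h | h <;> rw [h] <;> push_cast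
      · exact Or.inl rfl
      · exact Or.inr (Or.inl rfl)
      · exact Or.inr (Or.inr rfl)
      · rw [hW, ← Int.cast_abs, h] at hne
        push_cast at hne
        exact absurd (by ring) hne
    obtain ⟨hbq, hqa, hab, haq, hqb⟩ := lt_chain hp1
    rcases key with h | h | h <;> rcases (abs_eq (by linarith)).mp h with h | h <;> simp [h]
  · rintro (rfl | rfl | rfl | rfl | rfl | rfl)
    exacts [(isPer_b hp0).isPreper, isPreper_neg_q hp0, isPreper_neg_a hp0, (isPer_a hp0).isPreper,
      isPreper_q hp0, isPreper_neg_b hp0]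

lemma ncard_setOf_isPreper : {x | IsPreper (c p) x}.ncard = 6 := by
  have hp1 : (1 : ℚ) < p := by exact_mod_cast hp.one_lt
  obtain ⟨hbq, hqa, hab, haq, hqb⟩ := lt_chain hp1
  rw [show {x | IsPreper (c p) x} = _ from Set.ext fun x => isPreper_iff hp hodd]
  rw [Set.ncard_insert_of_notMem, Set.ncard_insert_of_notMem, Set.ncard_insert_of_notMem,
    Set.ncard_insert_of_notMem, Set.ncard_pair]
  all_goals simp only [Set.mem_insert_iff, Set.mem_singleton_iff, not_or, ne_eq]
  all_goals and_intros <;> intro h <;> linarith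

-- `f_c²` maps all six preperiodic points into the 2-cycle.
lemma setOf_isPer : {x | IsPer (c p) x} = {a p, b p} := by
  have hp0 : (p : ℚ) ≠ 0 := by exact_mod_cast hp.ne_zero
  ext x
  constructor
  · intro hx
    obtain ⟨y, hy, rfl⟩ := hx.exists_iterate_eq 2
    rcases (isPreper_iff hp hodd).mp hy with rfl | rfl | rfl | rfl | rfl | rfl <;>
      simp [fc_neg, fc_a hp0, fc_b hp0, fc_q hp0]
  · rintro (rfl | rfl)
    exacts [isPer_a hp0, isPer_b hp0]

end arithmetic

end Graph62

/-- Graph 6(2): infinitely many `c ∈ ℚ` with exactly 6 rational preperiodic points,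
exactly 2 of them periodic, the two periodic points forming a 2-cycle. -/
theorem graph_6_2 :
    {c : ℚ | {x : ℚ | IsPreper c x}.ncard = 6 ∧
      ∃ a b : ℚ, a ≠ b ∧ {x : ℚ | IsPer c x} = {a, b} ∧
        fc c a = b ∧ fc c b = a}.Infinite := by
  have hprimes : {p : ℕ | p.Prime ∧ Odd p}.Infinite :=
    (Nat.infinite_setOfPred_prime.sdiff (Set.finite_singleton 2)).mono
      fun p hp => ⟨hp.1, hp.1.odd_of_ne_two hp.2⟩
  have hinj : Set.InjOn (fun p : ℕ => Graph62.c p) {p | p.Prime ∧ Odd p} := fun m hm n hn h =>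
    Nat.cast_injective (Graph62.c_injOn (by simpa using hm.1.one_le) (by simpa using hn.1.one_le) h)
  refine (hprimes.image hinj).mono ?_
  rintro _ ⟨p, ⟨hp, hodd⟩, rfl⟩
  have hp0 : (p : ℚ) ≠ 0 := by exact_mod_cast hp.ne_zero
  obtain ⟨hbq, hqa, hab, -, -⟩ := Graph62.lt_chain (u := p) (by exact_mod_cast hp.one_lt)
  exact Set.mem_ofPred.mpr ⟨Graph62.ncard_setOf_isPreper hp hodd, Graph62.a p, Graph62.b p,
    by linarith, Graph62.setOf_isPer hp hodd,
    Graph62.fc_a hp0, Graph62.fc_b hp0⟩
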